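/- arXiv:1212.5313 — 5 statements merged into one kernel-verified Lean document; each statement's English description precedes it below -/
import Mathlib

section
/- (Gauss) Every natural number n can be written as a sum of three triangular numbers; equivalently, there exist natural numbers a, b, c with 2n = a(a+1) + b(b+1) + c(c+1). -/
set_option maxHeartbeats 1000000

open Finset

open Finset

lemma not_square_of_mod4 {m : ℕ} (h : m % 4 = 3) (k : ℕ) : k * k ≠ m := by
  intro hk
  rcases Nat.even_or_odd k with ⟨j, hj⟩ | ⟨j, hj⟩
  · subst hj; have : (j+j)*(j+j) = 4*(j*j) := by ring
    omega
  · subst hj; have : (2*j+1)*(2*j+1) = 4*(j*j+j) + 1 := by ring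
    omega

lemma not_square_two_mul_odd {m : ℕ} (h : m % 2 = 1) (k : ℕ) : k * k ≠ 2 * m := by
  intro hk
  rcases Nat.even_or_odd k with ⟨j, hj⟩ | ⟨j, hj⟩
  · subst hj; have : (j+j)*(j+j) = 2*(2*(j*j)) := by ring
    omega
  · subst hj; have : (2*j+1)*(2*j+1) = 2*(2*(j*j+j)) + 1 := by ring
    omega

lemma sqrt_lt_of_not_square {m : ℕ} (hm : ∀ k : ℕ, k * k ≠ m) :
    Nat.sqrt m * Nat.sqrt m < m :=
  lt_of_le_of_ne (Nat.sqrt_le m) (hm _)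

lemma sq_le_of_abs_le {t X : ℤ} (h1 : -X ≤ t) (h2 : t ≤ X) : t^2 ≤ X * X := by
  nlinarith [mul_nonneg (by linarith : (0:ℤ) ≤ X - t) (by linarith : (0:ℤ) ≤ X + t)]

lemma lattice_point (N P : ℕ) (b : ℤ) (hN : 0 < N) (hP : 0 < P)
    (hNs : ∀ k : ℕ, k * k ≠ N) (hPs : ∀ k : ℕ, k * k ≠ P)
    (hNPs : ∀ k : ℕ, k * k ≠ N * P) :
    ∃ x y z : ℤ, ¬(x = 0 ∧ y = 0 ∧ z = 0) ∧ (N:ℤ) ∣ (x - 2*y) ∧ (P:ℤ) ∣ (x - b*z)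
      ∧ x^2 < N*P ∧ y^2 < N ∧ z^2 < P := by
  haveI : NeZero N := ⟨hN.ne'⟩
  haveI : NeZero P := ⟨hP.ne'⟩
  set X := Nat.sqrt (N*P) with hXdef
  set Y := Nat.sqrt N with hYdef
  set Z := Nat.sqrt P with hZdef
  have hX1 : X * X < N * P := sqrt_lt_of_not_square hNPs
  have hY1 : Y * Y < N := sqrt_lt_of_not_square hNs
  have hZ1 : Z * Z < P := sqrt_lt_of_not_square hPs
  have hX2 : N * P < (X+1) * (X+1) := Nat.lt_succ_sqrt (N*P)
  have hY2 : N < (Y+1) * (Y+1) := Nat.lt_succ_sqrt N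
  have hZ2 : P < (Z+1) * (Z+1) := Nat.lt_succ_sqrt P
  have hcard : N * P < ((X+1) * ((Y+1) * (Z+1))) := by
    have key : (N*P)*(N*P) < ((X+1)*((Y+1)*(Z+1))) * ((X+1)*((Y+1)*(Z+1))) := by
      calc (N*P)*(N*P) < (N*P+1)*((N+1)*(P+1)) := by nlinarith
        _ ≤ ((X+1)*(X+1))*(((Y+1)*(Y+1))*((Z+1)*(Z+1))) :=
            Nat.mul_le_mul hX2 (Nat.mul_le_mul hY2 hZ2)
        _ = ((X+1)*((Y+1)*(Z+1))) * ((X+1)*((Y+1)*(Z+1))) := by ring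
    exact Nat.mul_self_lt_mul_self_iff.mp key
  set s : Finset (ℕ × ℕ × ℕ) := range (X+1) ×ˢ (range (Y+1) ×ˢ range (Z+1)) with hs
  have hscard : s.card = (X+1) * ((Y+1) * (Z+1)) := by
    simp [hs, Finset.card_product]
  set f : ℕ × ℕ × ℕ → ZMod N × ZMod P :=
    fun t => ((t.1 : ZMod N) - 2 * (t.2.1 : ZMod N), (t.1 : ZMod P) - b * (t.2.2 : ZMod P))
    with hf
  have hmaps : ∀ a ∈ s, f a ∈ (Finset.univ : Finset (ZMod N × ZMod P)) := by
    intro a _; exact Finset.mem_univ _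
  have hlt : (Finset.univ : Finset (ZMod N × ZMod P)).card < s.card := by
    rw [hscard, Finset.card_univ, Fintype.card_prod, ZMod.card, ZMod.card]
    exact hcard
  obtain ⟨t1, ht1, t2, ht2, hne, hfeq⟩ := Finset.exists_ne_map_eq_of_card_lt_of_maps_to hlt hmaps
  simp only [hs, Finset.mem_product, Finset.mem_range] at ht1 ht2
  obtain ⟨h11, h12, h13⟩ := ht1
  obtain ⟨h21, h22, h23⟩ := ht2
  refine ⟨(t1.1 : ℤ) - t2.1, (t1.2.1 : ℤ) - t2.2.1, (t1.2.2 : ℤ) - t2.2.2, ?_, ?_, ?_, ?_, ?_, ?_⟩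
  · rintro ⟨e1, e2, e3⟩
    exact hne (Prod.ext (by omega) (Prod.ext (by omega) (by omega)))
  · have h := congrArg Prod.fst hfeq
    simp only [hf] at h
    have h2 : ((((t1.1 : ℤ) - t2.1) - 2 * ((t1.2.1 : ℤ) - t2.2.1) : ℤ) : ZMod N) = 0 := by
      push_cast
      rw [sub_eq_zero]
      linear_combination h
    exact (ZMod.intCast_zmod_eq_zero_iff_dvd _ N).mp h2
  · have h := congrArg Prod.snd hfeq
    simp only [hf] at h
    have h2 : ((((t1.1 : ℤ) - t2.1) - b * ((t1.2.2 : ℤ) - t2.2.2) : ℤ) : ZMod P) = 0 := by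
      push_cast
      rw [sub_eq_zero]
      linear_combination h
    exact (ZMod.intCast_zmod_eq_zero_iff_dvd _ P).mp h2
  · have b1 : (t1.1 : ℤ) ≤ X := by exact_mod_cast Nat.lt_succ_iff.mp h11
    have b2 : (t2.1 : ℤ) ≤ X := by exact_mod_cast Nat.lt_succ_iff.mp h21
    have hx : (X:ℤ) * X < (N:ℤ) * P := by exact_mod_cast hX1
    have c1 : (0:ℤ) ≤ t1.1 := Int.natCast_nonneg _
    have c2 : (0:ℤ) ≤ t2.1 := Int.natCast_nonneg _
    have := sq_le_of_abs_le (t := (t1.1 : ℤ) - t2.1) (X := X) (by linarith) (by linarith)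
    linarith
  · have b1 : (t1.2.1 : ℤ) ≤ Y := by exact_mod_cast Nat.lt_succ_iff.mp h12
    have b2 : (t2.2.1 : ℤ) ≤ Y := by exact_mod_cast Nat.lt_succ_iff.mp h22
    have hy : (Y:ℤ) * Y < (N:ℤ) := by exact_mod_cast hY1
    have c1 : (0:ℤ) ≤ t1.2.1 := Int.natCast_nonneg _
    have c2 : (0:ℤ) ≤ t2.2.1 := Int.natCast_nonneg _
    have := sq_le_of_abs_le (t := (t1.2.1 : ℤ) - t2.2.1) (X := Y) (by linarith) (by linarith)
    linarith
  · have b1 : (t1.2.2 : ℤ) ≤ Z := by exact_mod_cast Nat.lt_succ_iff.mp h13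
    have b2 : (t2.2.2 : ℤ) ≤ Z := by exact_mod_cast Nat.lt_succ_iff.mp h23
    have hz : (Z:ℤ) * Z < (P:ℤ) := by exact_mod_cast hZ1
    have c1 : (0:ℤ) ≤ t1.2.2 := Int.natCast_nonneg _
    have c2 : (0:ℤ) ≤ t2.2.2 := Int.natCast_nonneg _
    have := sq_le_of_abs_le (t := (t1.2.2 : ℤ) - t2.2.2) (X := Z) (by linarith) (by linarith)
    linarith

lemma round_div (u : ℤ) (d : ℤ) (hd : 0 < d) :
    ∃ y r : ℤ, u = d * y + r ∧ 4 * r^2 ≤ d^2 := by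
  set r0 := u % d with hr0
  have h0 : 0 ≤ r0 := Int.emod_nonneg u hd.ne'
  have h1 : r0 < d := Int.emod_lt_of_pos u hd
  have hdvd : d ∣ u - r0 := Int.dvd_self_sub_of_emod_eq rfl
  obtain ⟨y0, hy0⟩ := hdvd
  by_cases hc : 2 * r0 ≤ d
  · exact ⟨y0, r0, by linarith [hy0], by nlinarith⟩
  · exact ⟨y0 + 1, r0 - d, by linarith [hy0], by nlinarith⟩

lemma descent (m : ℕ) : ∀ d : ℕ, 0 < d → ∀ u1 u2 u3 : ℤ,
    u1^2 + u2^2 + u3^2 = (m : ℤ) * d^2 →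
    ∃ x y z : ℤ, x^2 + y^2 + z^2 = (m : ℤ) := by
  intro d
  induction d using Nat.strong_induction_on with
  | _ d ih =>
    intro hd u1 u2 u3 hQ
    have hdz : (0:ℤ) < (d:ℤ) := by exact_mod_cast hd
    obtain ⟨y1, r1, he1, hb1⟩ := round_div u1 d hdz
    obtain ⟨y2, r2, he2, hb2⟩ := round_div u2 d hdz
    obtain ⟨y3, r3, he3, hb3⟩ := round_div u3 d hdz
    by_cases hez : r1^2 + r2^2 + r3^2 = 0
    · have hr1 : r1 = 0 := by nlinarith [sq_nonneg r1, sq_nonneg r2, sq_nonneg r3]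
      have hr2 : r2 = 0 := by nlinarith [sq_nonneg r1, sq_nonneg r2, sq_nonneg r3]
      have hr3 : r3 = 0 := by nlinarith [sq_nonneg r1, sq_nonneg r2, sq_nonneg r3]
      refine ⟨y1, y2, y3, ?_⟩
      have h2 : (d:ℤ)^2 * (y1^2 + y2^2 + y3^2) = (d:ℤ)^2 * (m:ℤ) := by
        subst he1 he2 he3
        rw [hr1, hr2, hr3] at hQ
        linear_combination hQ
      exact mul_left_cancel₀ (by positivity) h2
    · have hdvd : (d:ℤ) ∣ r1^2 + r2^2 + r3^2 := by
        refine ⟨(m:ℤ)*d - 2*(u1*y1 + u2*y2 + u3*y3) + d*(y1^2+y2^2+y3^2), ?_⟩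
        subst he1 he2 he3
        linear_combination hQ
      obtain ⟨d', hd'⟩ := hdvd
      have hd'pos : 0 < d' := by
        rcases lt_trichotomy d' 0 with h | h | h
        · nlinarith [sq_nonneg r1, sq_nonneg r2, sq_nonneg r3]
        · exact absurd (by rw [hd', h, mul_zero]) hez
        · exact h
      have h4e : 4*(r1^2 + r2^2 + r3^2) ≤ 3*(d:ℤ)^2 := by linarith
      have hd'lt : d' < d := by nlinarith
      have hkey : d' = (m:ℤ)*(d:ℤ) - 2*(u1*y1 + u2*y2 + u3*y3) + (d:ℤ)*(y1^2+y2^2+y3^2) := by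
        have h2 : (d:ℤ) * d' = (d:ℤ) * ((m:ℤ)*(d:ℤ) - 2*(u1*y1 + u2*y2 + u3*y3) + (d:ℤ)*(y1^2+y2^2+y3^2)) := by
          rw [← hd']
          subst he1 he2 he3
          linear_combination hQ
        exact mul_left_cancel₀ hdz.ne' h2
      have hnew : (d'*y1 + ((y1^2+y2^2+y3^2) - m)*r1)^2
          + (d'*y2 + ((y1^2+y2^2+y3^2) - m)*r2)^2
          + (d'*y3 + ((y1^2+y2^2+y3^2) - m)*r3)^2 = (m:ℤ) * d'^2 := by
        have hr1' : r1 = u1 - d*y1 := by linarith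
        have hr2' : r2 = u2 - d*y2 := by linarith
        have hr3' : r3 = u3 - d*y3 := by linarith
        have he' : (u1 - d*y1)^2 + (u2 - d*y2)^2 + (u3 - d*y3)^2 = d * d' := by
          rw [← hr1', ← hr2', ← hr3']; exact hd'
        rw [hr1', hr2', hr3']
        linear_combination (((y1^2+y2^2+y3^2) - (m:ℤ))^2) * he' +
          (d' * ((y1^2+y2^2+y3^2) - (m:ℤ))) * hkey
      have hcast : ((d'.toNat : ℕ) : ℤ) = d' := Int.toNat_of_nonneg hd'pos.le
      have hnew' : (d'*y1 + ((y1^2+y2^2+y3^2) - m)*r1)^2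
          + (d'*y2 + ((y1^2+y2^2+y3^2) - m)*r2)^2
          + (d'*y3 + ((y1^2+y2^2+y3^2) - m)*r3)^2 = (m:ℤ) * (d'.toNat : ℤ)^2 := by
        rw [hcast]; exact hnew
      exact ih d'.toNat (by omega) (by omega) _ _ _ hnew'

/-- key arithmetic step: m ≡ 3 mod 8 is m·Z² = sum of three squares, Z ≠ 0 -/
lemma rational_rep (m : ℕ) (hm : m % 8 = 3) :
    ∃ A B C Z : ℤ, Z ≠ 0 ∧ A^2 + B^2 + C^2 = (m:ℤ) * Z^2 := by
  have hm3 : 3 ≤ m := by omega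
  haveI : NeZero (8*m) := ⟨by omega⟩
  -- Dirichlet prime p ≡ 1 mod 8, p ≡ -2 mod m
  have hodd2 : Odd (m-2) := Nat.odd_iff.mpr (by omega)
  have h1 : Nat.Coprime (m-2) 8 := by
    have h2' : Nat.Coprime (m-2) 2 := Nat.coprime_two_right.mpr hodd2
    have := h2'.pow_right 3
    norm_num at this
    exact this
  have h2 : Nat.Coprime (m-2) m := by
    have hle : 2 ≤ m := by omega
    rw [show m - 2 = m - 2 from rfl]
    have := (Nat.coprime_sub_self_right (m := m-2) (n := m) ?_)
    · rw [show m - (m-2) = 2 by omega] at this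
      exact this.mp (Nat.coprime_two_right.mpr (Nat.odd_iff.mpr (by omega)))
    · omega
  have hcop : Nat.Coprime (m-2) (8*m) := Nat.Coprime.mul_right h1 h2
  have hunit : IsUnit (((m-2 : ℕ)) : ZMod (8*m)) := (ZMod.isUnit_iff_coprime _ _).mpr hcop
  obtain ⟨p, hpgt, hpprime, hpmod⟩ := Nat.forall_exists_prime_gt_and_eq_mod hunit (8*m)
  haveI : Fact p.Prime := ⟨hpprime⟩
  have hmodeq : p ≡ (m-2) [MOD 8*m] := (ZMod.natCast_eq_natCast_iff _ _ _).mp hpmod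
  have hp8 : p % 8 = 1 := by
    have h8 : p ≡ (m-2) [MOD 8] := Nat.ModEq.of_dvd (dvd_mul_right 8 m) hmodeq
    have : p % 8 = (m-2) % 8 := h8
    omega
  have hdvdnat : m ∣ p + 2 := by
    have hmm : p ≡ (m-2) [MOD m] := Nat.ModEq.of_dvd (dvd_mul_left m 8) hmodeq
    have h2' : p + 2 ≡ (m-2) + 2 [MOD m] := Nat.ModEq.add_right 2 hmm
    have hm2 : (m-2) + 2 = m := by omega
    rw [hm2] at h2'
    have : p + 2 ≡ 0 [MOD m] := h2'.trans (Nat.modEq_zero_iff_dvd.mpr dvd_rfl)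
    exact (Nat.modEq_zero_iff_dvd).mp this
  have hpodd : p % 2 = 1 := by omega
  have hpndvd : ¬ (p ∣ m) := fun h => by
    have := Nat.le_of_dvd (by omega) h; omega
  have hmzmodp : ((m:ℕ) : ZMod p) ≠ 0 := by
    rw [Ne, ZMod.natCast_eq_zero_iff]
    exact hpndvd
  -- quadratic reciprocity: m is a square mod p
  have hpm2int : (m:ℤ) ∣ (p:ℤ) + 2 := by exact_mod_cast Int.natCast_dvd_natCast.mpr hdvdnat
  have hleg : legendreSym p m = 1 := by
    rw [jacobiSym.legendreSym.to_jacobiSym]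
    have hmodd : Odd m := Nat.odd_iff.mpr (by omega)
    have hrec : jacobiSym (p : ℤ) m = jacobiSym (m : ℤ) p :=
      jacobiSym.quadratic_reciprocity_one_mod_four (by omega) hmodd
    rw [← hrec]
    have hmod : ((p:ℤ)) % (m:ℕ) = ((-2 : ℤ)) % (m:ℕ) := by
      have : ((m:ℕ):ℤ) ∣ (-2 : ℤ) - (p:ℤ) := by
        have : (-2 : ℤ) - (p:ℤ) = -((p:ℤ)+2) := by ring
        rw [this]
        exact dvd_neg.mpr hpm2int
      exact Int.ModEq.symm (Int.modEq_iff_dvd.mpr this) |>.symm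
    rw [jacobiSym.mod_left' hmod, jacobiSym.at_neg_two hmodd, ZMod.χ₈'_nat_eq_if_mod_eight]
    simp only [show m % 2 = 1 by omega, show m % 8 = 3 from hm]
    norm_num
  have hsq : IsSquare ((m:ℕ) : ZMod p) := (legendreSym.eq_one_iff' p hmzmodp).mp hleg
  obtain ⟨c, hc⟩ := hsq
  -- lift to an odd integer square root B of m mod p
  have hcval : ((c.val : ℕ) : ZMod p) = c := ZMod.natCast_val c |>.trans (ZMod.cast_id _ _)
  set B : ℤ := if c.val % 2 = 0 then (p:ℤ) - c.val else (c.val : ℤ) with hB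
  have hBodd : B % 2 = 1 := by
    rcases Nat.even_or_odd c.val with h | h
    · have he := Nat.even_iff.mp h
      rw [hB, if_pos he]
      omega
    · have ho := Nat.odd_iff.mp h
      rw [hB, if_neg (by omega : ¬ c.val % 2 = 0)]
      omega
  have hpB : (p:ℤ) ∣ B^2 - m := by
    have base : ((((c.val:ℤ))^2 - m : ℤ) : ZMod p) = 0 := by
      push_cast
      rw [hcval, hc]
      ring
    have base' : (p:ℤ) ∣ ((c.val:ℤ))^2 - m := (ZMod.intCast_zmod_eq_zero_iff_dvd _ _).mp base
    rcases eq_or_ne (c.val % 2) 0 with h | h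
    · rw [hB, if_pos h]
      have : ((p:ℤ) - c.val)^2 - m = (((c.val:ℤ))^2 - m) + (p:ℤ)*((p:ℤ) - 2*c.val) := by ring
      rw [this]
      exact dvd_add base' (dvd_mul_right _ _)
    · rw [hB, if_neg h]; exact base'
  have h2pB : (2*(p:ℤ)) ∣ B^2 - m := by
    obtain ⟨k, hk⟩ := hpB
    have hke : Even k := by
      have hBsq : B^2 % 2 = 1 := by
        obtain ⟨t, ht⟩ := Int.odd_iff.mpr hBodd
        have : B^2 = 4*(t*t+t)+1 := by rw [ht]; ring
        omega
      rcases Int.even_or_odd k with h | h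
      · exact h
      · exfalso
        obtain ⟨t, ht⟩ := h
        obtain ⟨s, hs⟩ := (Nat.odd_iff.mpr hpodd : Odd p)
        have : B^2 - (m:ℤ) = (2*s+1)*(2*t+1) := by
          rw [hk, ht]; push_cast [hs]; ring
        have hmm : (m:ℤ) % 2 = 1 := by omega
        have hexp : (2*s+1)*(2*t+1) = 2*(2*s*t+s+t) + 1 := by ring
        omega
    obtain ⟨j, hj⟩ := hke
    exact ⟨j, by rw [hk, hj]; ring⟩
  -- lattice point
  have hmp_odd : (m * p) % 2 = 1 :=
    Nat.odd_iff.mp ((Nat.odd_iff.mpr (by omega : m % 2 = 1)).mul (Nat.odd_iff.mpr hpodd))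
  obtain ⟨x, y, z, hne, hdx, hdz, hx2, hy2, hz2⟩ :=
    lattice_point m (2*p) B (by omega) (by omega)
      (not_square_of_mod4 (by omega))
      (not_square_two_mul_odd hpodd)
      (fun k hk => not_square_two_mul_odd hmp_odd k (by rw [hk]; ring))
  -- F ≡ 0 mod 2pm
  set F : ℤ := x^2 + 2*(p:ℤ)*y^2 - (m:ℤ)*z^2 with hFdef
  have hFm : (m:ℤ) ∣ F := by
    have hEq : F = (x - 2*y)*(x + 2*y) + 2*((p:ℤ)+2)*y^2 - (m:ℤ)*z^2 := by
      rw [hFdef]; ring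
    rw [hEq]
    exact dvd_sub (dvd_add (hdx.mul_right _) ((hpm2int.mul_left 2).mul_right _))
      (dvd_mul_right _ _)
  have hF2p : (2*(p:ℤ)) ∣ F := by
    have hEq : F = (x - B*z)*(x + B*z) + 2*(p:ℤ)*y^2 + (B^2 - (m:ℤ))*z^2 := by
      rw [hFdef]; ring
    rw [hEq]
    have hdz' : (2*(p:ℤ)) ∣ (x - B*z) := by exact_mod_cast hdz
    exact dvd_add (dvd_add (hdz'.mul_right _) (⟨y^2, by ring⟩ : (2*(p:ℤ)) ∣ 2*(p:ℤ)*y^2)) (h2pB.mul_right _)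
  have hcopmp : IsCoprime ((m:ℕ):ℤ) ((2*p:ℕ):ℤ) := by
    rw [Nat.isCoprime_iff_coprime]
    exact Nat.Coprime.mul_right (Nat.coprime_two_right.mpr (Nat.odd_iff.mpr (by omega)))
      ((hpprime.coprime_iff_not_dvd.mpr hpndvd).symm)
  have hF2p' : (((2*p:ℕ)):ℤ) ∣ F := by push_cast; exact hF2p
  have hFmp : ((m:ℤ)*(2*(p:ℤ))) ∣ F := by
    have h' := hcopmp.mul_dvd hFm hF2p'
    push_cast at h'
    exact h'
  obtain ⟨k, hk⟩ := hFmp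
  -- bounds
  have hxw : x^2 < (m:ℤ)*(2*(p:ℤ)) := by push_cast at hx2 ⊢; linarith
  have hyw : y^2 < (m:ℤ) := by exact_mod_cast hy2
  have hzw : z^2 < 2*(p:ℤ) := by exact_mod_cast hz2
  have hmpos : (0:ℤ) < m := by exact_mod_cast (by omega : 0 < m)
  have hppos : (0:ℤ) < p := by exact_mod_cast (by omega : 0 < p)
  have hk01 : k = 0 ∨ k = 1 := by
    have hFlow : -((m:ℤ)*(2*(p:ℤ))) < F := by
      rw [hFdef]
      nlinarith [sq_nonneg x, sq_nonneg y]
    have hFhigh : F < 2*((m:ℤ)*(2*(p:ℤ))) := by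
      rw [hFdef]
      nlinarith [sq_nonneg z]
    rw [hk] at hFlow hFhigh
    have hprod : (0:ℤ) < (m:ℤ)*(2*(p:ℤ)) := by positivity
    have h0 : (-1:ℤ) < k := by
      have h' : (m:ℤ)*(2*(p:ℤ)) * (-1) < (m:ℤ)*(2*(p:ℤ)) * k := by linarith
      exact (mul_lt_mul_iff_right₀ hprod).mp h'
    have h1 : k < 2 := by
      have h' : (m:ℤ)*(2*(p:ℤ)) * k < (m:ℤ)*(2*(p:ℤ)) * 2 := by linarith
      exact (mul_lt_mul_iff_right₀ hprod).mp h'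
    omega
  rcases hk01 with hk0 | hk1
  · -- F = 0 : direct solution
    rw [hk0, mul_zero] at hk
    have hzne : z ≠ 0 := by
      intro hz0
      rw [hFdef, hz0] at hk
      have hx0 : x = 0 := by nlinarith [sq_nonneg x, sq_nonneg y, hppos]
      have hy0 : y = 0 := by nlinarith [sq_nonneg x, sq_nonneg y, hppos]
      exact hne ⟨hx0, hy0, hz0⟩
    -- x² + 2p y² = m z² ; 2p = u² + v²
    obtain ⟨a0, b0, hab⟩ := Nat.Prime.sq_add_sq (p := p) (by omega)
    have hab' : ((a0:ℤ)+b0)^2 + ((a0:ℤ)-b0)^2 = 2*(p:ℤ) := by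
      have : ((a0:ℤ))^2 + (b0:ℤ)^2 = (p:ℤ) := by exact_mod_cast congrArg (Nat.cast : ℕ → ℤ) hab
      linarith [this, sq_nonneg ((a0:ℤ)+b0)] 
    refine ⟨x, ((a0:ℤ)+b0)*y, ((a0:ℤ)-b0)*y, z, hzne, ?_⟩
    have hF0 : x^2 + 2*(p:ℤ)*y^2 - (m:ℤ)*z^2 = 0 := hk
    linear_combination hF0 + y^2 * hab'
  · -- F = 2pm : use composition identity
    rw [hk1, mul_one] at hk
    have hF1 : x^2 + 2*(p:ℤ)*y^2 - (m:ℤ)*z^2 = (m:ℤ)*(2*(p:ℤ)) := hk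
    obtain ⟨a0, b0, hab⟩ := Nat.Prime.sq_add_sq (p := p) (by omega)
    have hab' : ((a0:ℤ)+b0)^2 + ((a0:ℤ)-b0)^2 = 2*(p:ℤ) := by
      have : ((a0:ℤ))^2 + (b0:ℤ)^2 = (p:ℤ) := by exact_mod_cast congrArg (Nat.cast : ℕ → ℤ) hab
      linarith
    refine ⟨x*z + 2*(p:ℤ)*y, ((a0:ℤ)+b0)*(x - y*z), ((a0:ℤ)-b0)*(x - y*z), z^2 + 2*(p:ℤ), ?_, ?_⟩
    · positivity
    · linear_combination (z^2 + 2*(p:ℤ)) * hF1 + ((x - y*z)^2) * hab'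

lemma odd_sq_mod8 {x : ℤ} (h : Odd x) : x^2 % 8 = 1 := by
  obtain ⟨t, ht⟩ := h
  have h2 : x^2 = 4*(t*t+t)+1 := by rw [ht]; ring
  have h3 : (2:ℤ) ∣ t*t+t := by
    rcases Int.even_or_odd t with ⟨s, hs⟩ | ⟨s, hs⟩
    · exact ⟨s*t + s, by rw [hs]; ring⟩
    · exact ⟨s*t + t, by rw [hs]; ring⟩
  omega

lemma even_sq_mod8 {x : ℤ} (h : Even x) : x^2 % 8 = 0 ∨ x^2 % 8 = 4 := by
  obtain ⟨t, ht⟩ := h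
  rcases Int.even_or_odd t with ⟨s, hs⟩ | ⟨s, hs⟩
  · left; have : x^2 = 8*(2*(s*s)) := by rw [ht, hs]; ring
    omega
  · right; have : x^2 = 8*(2*(s*s)+2*s) + 4 := by rw [ht, hs]; ring
    omega

theorem stmt3 (n : ℕ) : ∃ a b c : ℕ, 2 * n = a * (a + 1) + b * (b + 1) + c * (c + 1) := by
  have hm : (8*n+3) % 8 = 3 := by omega
  obtain ⟨A, B, C, Z, hZ, hABC⟩ := rational_rep (8*n+3) hm
  obtain ⟨x, y, z, hxyz⟩ := descent (8*n+3) Z.natAbs (Int.natAbs_pos.mpr hZ) A B C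
    (by rw [Int.natAbs_sq]; exact hABC)
  have hcast : ((8*n+3 : ℕ) : ℤ) = 8*(n:ℤ)+3 := by push_cast; ring
  rw [hcast] at hxyz
  have key : ∀ w : ℤ, w^2 % 8 = 1 → Odd w := by
    intro w hw
    rcases Int.even_or_odd w with h | h
    · rcases even_sq_mod8 h with h' | h' <;> omega
    · exact h
  have hsq : ∀ w : ℤ, w^2 % 8 = 0 ∨ w^2 % 8 = 1 ∨ w^2 % 8 = 4 := by
    intro w
    rcases Int.even_or_odd w with h | h
    · rcases even_sq_mod8 h with h' | h'
      · exact Or.inl h'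
      · exact Or.inr (Or.inr h')
    · exact Or.inr (Or.inl (odd_sq_mod8 h))
  have hx1 : x^2 % 8 = 1 ∧ y^2 % 8 = 1 ∧ z^2 % 8 = 1 := by
    have h1 := hsq x; have h2 := hsq y; have h3 := hsq z
    omega
  have hox : Odd x.natAbs := Int.natAbs_odd.mpr (key x hx1.1)
  have hoy : Odd y.natAbs := Int.natAbs_odd.mpr (key y hx1.2.1)
  have hoz : Odd z.natAbs := Int.natAbs_odd.mpr (key z hx1.2.2)
  have hnat : x.natAbs^2 + y.natAbs^2 + z.natAbs^2 = 8*n+3 := by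
    have h2 : ((x.natAbs^2 + y.natAbs^2 + z.natAbs^2 : ℕ) : ℤ) = ((8*n+3 : ℕ) : ℤ) := by
      push_cast [Int.natAbs_sq]
      linarith [hxyz, sq_abs x, sq_abs y, sq_abs z]
    exact_mod_cast h2
  obtain ⟨a, ha⟩ := hox
  obtain ⟨b, hb⟩ := hoy
  obtain ⟨c, hc⟩ := hoz
  refine ⟨a, b, c, ?_⟩
  rw [ha, hb, hc] at hnat
  have ea : (2*a+1)^2 = 4*(a*(a+1)) + 1 := by ring
  have eb : (2*b+1)^2 = 4*(b*(b+1)) + 1 := by ring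
  have ec : (2*c+1)^2 = 4*(c*(c+1)) + 1 := by ring
  linarith [hnat, ea, eb, ec]
end

section
/- For every even natural number n, there exist natural numbers k_1, k_2, k_3, k_4 such that k_1(k_1+1) + k_2(k_2+1) + k_3(k_3+1) + k_4(k_4+1) = 2n and the sum ⌊(k_1+1)/2⌋ + ⌊(k_2+1)/2⌋ + ⌊(k_3+1)/2⌋ + ⌊(k_4+1)/2⌋ is even. -/
/-- Step 1: `2*(2m+1)` is a sum of two odd squares and two even squares. -/
private lemma step1 (m : ℕ) : ∃ x y z w : ℤ,
    x^2+y^2+z^2+w^2 = 2*(2*m+1) ∧ Odd x ∧ Odd y ∧ Even z ∧ Even w := by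
  obtain ⟨a, b, c, d, h⟩ := Nat.sum_four_squares (2*m+1)
  have hZ : (a:ℤ)^2 + (b:ℤ)^2 + (c:ℤ)^2 + (d:ℤ)^2 = 2*m+1 := by exact_mod_cast h
  -- parity of the sum a+b+c+d is odd
  have key : (a + b + c + d) % 2 = 1 := by
    obtain ⟨xa, hxa⟩ := (Nat.even_mul_succ_self a)
    obtain ⟨xb, hxb⟩ := (Nat.even_mul_succ_self b)
    obtain ⟨xc, hxc⟩ := (Nat.even_mul_succ_self c)
    obtain ⟨xd, hxd⟩ := (Nat.even_mul_succ_self d)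
    have ha : a^2 + a = xa + xa := by rw [← hxa]; ring
    have hb : b^2 + b = xb + xb := by rw [← hxb]; ring
    have hc : c^2 + c = xc + xc := by rw [← hxc]; ring
    have hd : d^2 + d = xd + xd := by rw [← hxd]; ring
    have h' := h
    generalize a^2 = A at h' ha
    generalize b^2 = B at h' hb
    generalize c^2 = C at h' hc
    generalize d^2 = D at h' hd
    omega
  rcases Nat.even_or_odd a with ha | ha <;>
  rcases Nat.even_or_odd b with hb | hb <;>
  rcases Nat.even_or_odd c with hc | hc <;>
  rcases Nat.even_or_odd d with hd | hd
  all_goals (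
    first
    | (exfalso
       have ha2 := ha; have hb2 := hb; have hc2 := hc; have hd2 := hd
       simp only [Nat.even_iff, Nat.odd_iff] at ha2 hb2 hc2 hd2
       omega)
    | skip)
  -- remaining 8 cases: odd number of odds
  all_goals first
      | (have ha' : Even (a:ℤ) := by exact_mod_cast ha)
      | (have ha' : Odd (a:ℤ) := by exact_mod_cast ha)
  all_goals first
      | (have hb' : Even (b:ℤ) := by exact_mod_cast hb)
      | (have hb' : Odd (b:ℤ) := by exact_mod_cast hb)
  all_goals first
      | (have hc' : Even (c:ℤ) := by exact_mod_cast hc)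
      | (have hc' : Odd (c:ℤ) := by exact_mod_cast hc)
  all_goals first
      | (have hd' : Even (d:ℤ) := by exact_mod_cast hd)
      | (have hd' : Odd (d:ℤ) := by exact_mod_cast hd)
  -- case Even a, Even b, Even c, Odd d
  · exact ⟨(d:ℤ)+a, (d:ℤ)-a, (b:ℤ)+c, (b:ℤ)-c,
      by linear_combination 2*hZ, hd'.add_even ha', hd'.sub_even ha',
      hb'.add hc', hb'.sub hc'⟩
  -- Even a, Even b, Odd c, Even d
  · exact ⟨(c:ℤ)+a, (c:ℤ)-a, (b:ℤ)+d, (b:ℤ)-d,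
      by linear_combination 2*hZ, hc'.add_even ha', hc'.sub_even ha',
      hb'.add hd', hb'.sub hd'⟩
  -- Even a, Odd b, Even c, Even d
  · exact ⟨(b:ℤ)+a, (b:ℤ)-a, (c:ℤ)+d, (c:ℤ)-d,
      by linear_combination 2*hZ, hb'.add_even ha', hb'.sub_even ha',
      hc'.add hd', hc'.sub hd'⟩
  -- Even a, Odd b, Odd c, Odd d
  · exact ⟨(b:ℤ)+a, (b:ℤ)-a, (c:ℤ)+d, (c:ℤ)-d,
      by linear_combination 2*hZ, hb'.add_even ha', hb'.sub_even ha',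
      hc'.add_odd hd', hc'.sub_odd hd'⟩
  -- Odd a, Even b, Even c, Even d
  · exact ⟨(a:ℤ)+b, (a:ℤ)-b, (c:ℤ)+d, (c:ℤ)-d,
      by linear_combination 2*hZ, ha'.add_even hb', ha'.sub_even hb',
      hc'.add hd', hc'.sub hd'⟩
  -- Odd a, Even b, Odd c, Odd d
  · exact ⟨(a:ℤ)+b, (a:ℤ)-b, (c:ℤ)+d, (c:ℤ)-d,
      by linear_combination 2*hZ, ha'.add_even hb', ha'.sub_even hb',
      hc'.add_odd hd', hc'.sub_odd hd'⟩
  -- Odd a, Odd b, Even c, Odd d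
  · exact ⟨(a:ℤ)+c, (a:ℤ)-c, (b:ℤ)+d, (b:ℤ)-d,
      by linear_combination 2*hZ, ha'.add_even hc', ha'.sub_even hc',
      hb'.add_odd hd', hb'.sub_odd hd'⟩
  -- Odd a, Odd b, Odd c, Even d
  · exact ⟨(a:ℤ)+d, (a:ℤ)-d, (b:ℤ)+c, (b:ℤ)-c,
      by linear_combination 2*hZ, ha'.add_even hd', ha'.sub_even hd',
      hb'.add_odd hc', hb'.sub_odd hc'⟩

/-- Step 2: `8m+4` is a sum of four odd squares (in ℤ). -/
private lemma step2 (m : ℕ) : ∃ a b c d : ℤ,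
    a^2+b^2+c^2+d^2 = 8*m+4 ∧ Odd a ∧ Odd b ∧ Odd c ∧ Odd d := by
  obtain ⟨x, y, z, w, h, hx, hy, hz, hw⟩ := step1 m
  exact ⟨x+z, x-z, y+w, y-w, by linear_combination 2*h,
    hx.add_even hz, hx.sub_even hz, hy.add_even hw, hy.sub_even hw⟩

/-- Pointwise parity: `(k+1)/2 + k(k+1)/2` is always even. -/
private lemma parity_aux (k : ℕ) : ∃ e, (k+1)/2 + k*(k+1)/2 = 2*e := by
  rcases Nat.even_or_odd k with ⟨j, rfl⟩ | ⟨j, rfl⟩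
  · refine ⟨j*j + j, ?_⟩
    have h1 : (j+j+1)/2 = j := by omega
    have h2 : (j+j)*(j+j+1) = 2*(2*j*j+j) := by ring
    rw [h1, h2, Nat.mul_div_cancel_left _ (by norm_num)]
    ring
  · refine ⟨j*j + 2*j + 1, ?_⟩
    have h1 : (2*j+1+1)/2 = j+1 := by omega
    have h2 : (2*j+1)*(2*j+1+1) = 2*(2*j*j+3*j+1) := by ring
    rw [h1, h2, Nat.mul_div_cancel_left _ (by norm_num)]
    ring

theorem stmt4 (n : ℕ) (hn : Even n) :
    ∃ k₁ k₂ k₃ k₄ : ℕ,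
      k₁ * (k₁ + 1) + k₂ * (k₂ + 1) + k₃ * (k₃ + 1) + k₄ * (k₄ + 1) = 2 * n ∧
      Even ((k₁ + 1) / 2 + (k₂ + 1) / 2 + (k₃ + 1) / 2 + (k₄ + 1) / 2) := by
  obtain ⟨a, b, c, d, h, ha, hb, hc, hd⟩ := step2 n
  obtain ⟨k₁, hk₁⟩ := Int.natAbs_odd.mpr ha
  obtain ⟨k₂, hk₂⟩ := Int.natAbs_odd.mpr hb
  obtain ⟨k₃, hk₃⟩ := Int.natAbs_odd.mpr hc
  obtain ⟨k₄, hk₄⟩ := Int.natAbs_odd.mpr hd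
  have hN : a.natAbs^2 + b.natAbs^2 + c.natAbs^2 + d.natAbs^2 = 8*n+4 := by
    have : ((a.natAbs^2 + b.natAbs^2 + c.natAbs^2 + d.natAbs^2 : ℕ) : ℤ) = 8*n+4 := by
      push_cast [Int.natAbs_sq]
      simpa [sq_abs] using h
    exact_mod_cast this
  rw [hk₁, hk₂, hk₃, hk₄] at hN
  have hsum : k₁*(k₁+1) + k₂*(k₂+1) + k₃*(k₃+1) + k₄*(k₄+1) = 2*n := by
    nlinarith [hN]
  refine ⟨k₁, k₂, k₃, k₄, hsum, ?_⟩
  obtain ⟨e₁, he₁⟩ := parity_aux k₁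
  obtain ⟨e₂, he₂⟩ := parity_aux k₂
  obtain ⟨e₃, he₃⟩ := parity_aux k₃
  obtain ⟨e₄, he₄⟩ := parity_aux k₄
  obtain ⟨t₁, ht₁⟩ := Nat.even_mul_succ_self k₁
  obtain ⟨t₂, ht₂⟩ := Nat.even_mul_succ_self k₂
  obtain ⟨t₃, ht₃⟩ := Nat.even_mul_succ_self k₃
  obtain ⟨t₄, ht₄⟩ := Nat.even_mul_succ_self k₄
  obtain ⟨n', rfl⟩ := hn
  rw [Nat.even_iff]
  generalize k₁*(k₁+1) = p₁ at hsum he₁ ht₁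
  generalize k₂*(k₂+1) = p₂ at hsum he₂ ht₂
  generalize k₃*(k₃+1) = p₃ at hsum he₃ ht₃
  generalize k₄*(k₄+1) = p₄ at hsum he₄ ht₄
  omega
end

section
/- A natural number n is even if and only if there exist natural numbers k_1, k_2, k_3, k_4 with k_1(k_1+1) + k_2(k_2+1) + k_3(k_3+1) + k_4(k_4+1) = 2n and the sum ⌊(k_1+1)/2⌋ + ⌊(k_2+1)/2⌋ + ⌊(k_3+1)/2⌋ + ⌊(k_4+1)/2⌋ even. -/
/-- The square of a natural mod 4 equals its parity. -/
lemma sq_mod4 (a : ℕ) : a ^ 2 % 4 = a % 2 := by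
  rcases Nat.even_or_odd a with ⟨q, hq⟩ | ⟨q, hq⟩
  · have h : a ^ 2 = 4 * (q * q) := by subst hq; ring
    omega
  · have h : a ^ 2 = 4 * (q * q + q) + 1 := by subst hq; ring
    omega

/-- parity of (k+1)/2 equals parity of the triangular number k(k+1)/2. -/
lemma parA (k : ℕ) : ((k + 1) / 2) % 2 = (k * (k + 1) / 2) % 2 := by
  set q := k / 4 with hqdef
  have hr : k % 4 = 0 ∨ k % 4 = 1 ∨ k % 4 = 2 ∨ k % 4 = 3 := by omega
  set m := q * q with hmdef
  rcases hr with h | h | h | h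
  · have hk : k = 4 * q + 0 := by omega
    have h2 : k * (k + 1) = 2 * (8 * m + 2 * q + 0) := by rw [hk, hmdef]; ring
    omega
  · have hk : k = 4 * q + 1 := by omega
    have h2 : k * (k + 1) = 2 * (8 * m + 6 * q + 1) := by rw [hk, hmdef]; ring
    omega
  · have hk : k = 4 * q + 2 := by omega
    have h2 : k * (k + 1) = 2 * (8 * m + 10 * q + 3) := by rw [hk, hmdef]; ring
    omega
  · have hk : k = 4 * q + 3 := by omega
    have h2 : k * (k + 1) = 2 * (8 * m + 14 * q + 6) := by rw [hk, hmdef]; ring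
    omega

/-- From a pronic (odd) square helper: (p+r)^2 + |p-r|^2 = 2(p^2+r^2). -/
lemma pair_sq (p r : ℕ) : ∃ A B : ℕ, A % 2 = (p + r) % 2 ∧ B % 2 = (p + r) % 2 ∧
    A ^ 2 + B ^ 2 = 2 * (p ^ 2 + r ^ 2) := by
  rcases le_or_gt r p with h | h
  · obtain ⟨t, ht⟩ : ∃ t, p = r + t := ⟨p - r, by omega⟩
    refine ⟨p + r, t, by omega, by omega, ?_⟩
    subst ht; ring
  · obtain ⟨t, ht⟩ : ∃ t, r = p + t := ⟨r - p, by omega⟩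
    refine ⟨p + r, t, by omega, by omega, ?_⟩
    subst ht; ring

/-- odd number to triangular: if A is odd then A^2 = 4·k(k+1)+1 with k = A/2. -/
lemma odd_sq (A : ℕ) (hA : A % 2 = 1) : ∃ k : ℕ, A ^ 2 = 4 * (k * (k + 1)) + 1 := by
  refine ⟨A / 2, ?_⟩
  obtain ⟨k, hk⟩ : ∃ k, A = 2 * k + 1 := ⟨A / 2, by omega⟩
  have : A / 2 = k := by omega
  rw [this, hk]; ring

/-- core: two odd and two even squares summing to 4n+2 give four triangulars. -/
lemma core (n p q r s : ℕ) (hp : p % 2 = 1) (hq : q % 2 = 1) (hr : r % 2 = 0)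
    (hs : s % 2 = 0) (h : p ^ 2 + q ^ 2 + r ^ 2 + s ^ 2 = 4 * n + 2) :
    ∃ k₁ k₂ k₃ k₄ : ℕ,
      k₁ * (k₁ + 1) + k₂ * (k₂ + 1) + k₃ * (k₃ + 1) + k₄ * (k₄ + 1) = 2 * n := by
  obtain ⟨A, B, hA, hB, hAB⟩ := pair_sq p r
  obtain ⟨C, D, hC, hD, hCD⟩ := pair_sq q s
  have hAo : A % 2 = 1 := by omega
  have hBo : B % 2 = 1 := by omega
  have hCo : C % 2 = 1 := by omega
  have hDo : D % 2 = 1 := by omega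
  obtain ⟨k₁, h1⟩ := odd_sq A hAo
  obtain ⟨k₂, h2⟩ := odd_sq B hBo
  obtain ⟨k₃, h3⟩ := odd_sq C hCo
  obtain ⟨k₄, h4⟩ := odd_sq D hDo
  refine ⟨k₁, k₂, k₃, k₄, ?_⟩
  have hsum : A ^ 2 + B ^ 2 + C ^ 2 + D ^ 2 = 8 * n + 4 := by omega
  omega

/-- every 2n is a sum of four pronic numbers (Gauss via Lagrange). -/
lemma four_tri (n : ℕ) : ∃ k₁ k₂ k₃ k₄ : ℕ,
    k₁ * (k₁ + 1) + k₂ * (k₂ + 1) + k₃ * (k₃ + 1) + k₄ * (k₄ + 1) = 2 * n := by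
  obtain ⟨a, b, c, d, h⟩ := Nat.sum_four_squares (4 * n + 2)
  have ha := sq_mod4 a
  have hb := sq_mod4 b
  have hc := sq_mod4 c
  have hd := sq_mod4 d
  have ha2 : a % 2 = 0 ∨ a % 2 = 1 := by omega
  have hb2 : b % 2 = 0 ∨ b % 2 = 1 := by omega
  have hc2 : c % 2 = 0 ∨ c % 2 = 1 := by omega
  have hd2 : d % 2 = 0 ∨ d % 2 = 1 := by omega
  rcases ha2 with h1 | h1 <;> rcases hb2 with h2 | h2 <;> rcases hc2 with h3 | h3 <;>
    rcases hd2 with h4 | h4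
  · omega
  · omega
  · omega
  · exact core n c d a b h3 h4 h1 h2 (by omega)
  · omega
  · exact core n b d a c h2 h4 h1 h3 (by omega)
  · exact core n b c a d h2 h3 h1 h4 (by omega)
  · omega
  · omega
  · exact core n a d b c h1 h4 h2 h3 (by omega)
  · exact core n a c b d h1 h3 h2 h4 (by omega)
  · omega
  · exact core n a b c d h1 h2 h3 h4 h
  · omega
  · omega
  · omega

/-- key parity equivalence. -/
lemma key (n k₁ k₂ k₃ k₄ : ℕ)
    (h : k₁ * (k₁ + 1) + k₂ * (k₂ + 1) + k₃ * (k₃ + 1) + k₄ * (k₄ + 1) = 2 * n) :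
    (Even ((k₁ + 1) / 2 + (k₂ + 1) / 2 + (k₃ + 1) / 2 + (k₄ + 1) / 2) ↔ Even n) := by
  have p1 := parA k₁
  have p2 := parA k₂
  have p3 := parA k₃
  have p4 := parA k₄
  have e1 : k₁ * (k₁ + 1) % 2 = 0 := Nat.even_iff.1 (Nat.even_mul_succ_self k₁)
  have e2 : k₂ * (k₂ + 1) % 2 = 0 := Nat.even_iff.1 (Nat.even_mul_succ_self k₂)
  have e3 : k₃ * (k₃ + 1) % 2 = 0 := Nat.even_iff.1 (Nat.even_mul_succ_self k₃)
  have e4 : k₄ * (k₄ + 1) % 2 = 0 := Nat.even_iff.1 (Nat.even_mul_succ_self k₄)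
  rw [Nat.even_iff, Nat.even_iff]
  omega

theorem stmt5 (n : ℕ) :
    Even n ↔
    ∃ k₁ k₂ k₃ k₄ : ℕ,
      k₁ * (k₁ + 1) + k₂ * (k₂ + 1) + k₃ * (k₃ + 1) + k₄ * (k₄ + 1) = 2 * n ∧
      Even ((k₁ + 1) / 2 + (k₂ + 1) / 2 + (k₃ + 1) / 2 + (k₄ + 1) / 2) := by
  constructor
  · intro hn
    obtain ⟨k₁, k₂, k₃, k₄, h⟩ := four_tri n
    exact ⟨k₁, k₂, k₃, k₄, h, (key n k₁ k₂ k₃ k₄ h).2 hn⟩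
  · rintro ⟨k₁, k₂, k₃, k₄, h, hp⟩
    exact (key n k₁ k₂ k₃ k₄ h).1 hp
end

section
/- If l is a natural number of the form 4^a(8b+7) for natural numbers a, b, then l − 2 is not of the form 4^{a'}(8b'+7) for any natural numbers a', b'. -/
lemma aux_mod8 (a b : ℕ) : (4 ^ a * (8 * b + 7)) % 8 = 7 ∨
    (4 ^ a * (8 * b + 7)) % 8 = 4 ∨ (4 ^ a * (8 * b + 7)) % 8 = 0 := by
  match a with
  | 0 => left; omega
  | 1 => right; left; omega
  | (n+2) =>
    right; right
    have : 4 ^ (n+2) * (8 * b + 7) = 8 * (2 * 4 ^ n * (8 * b + 7)) := by ring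
    omega

theorem stmt10 (l a b : ℕ) (h : l = 4 ^ a * (8 * b + 7)) :
    ∀ a' b' : ℕ, l - 2 ≠ 4 ^ a' * (8 * b' + 7) := by
  intro a' b' heq
  have h1 := aux_mod8 a b
  have h2 := aux_mod8 a' b'
  have h3 : 1 ≤ 4 ^ a := Nat.one_le_pow _ _ (by norm_num)
  have h4 : 7 ≤ 4 ^ a * (8 * b + 7) := le_trans (by omega) (Nat.le_mul_of_pos_left _ h3)
  omega
end

section
/- For every natural number l ≥ 2, at least one of l and l − 2 is a sum of three squares of natural numbers. -/
/-!
Dirichlet's proof that every `n ≡ 1, 2 (mod 4)` is a sum of three squares.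

A positive definite integral binary form of determinant `Δ` takes a value `a` with
`3 a² ≤ 4 Δ` on a primitive vector (Lagrange reduction); for `Δ = 1` this makes it `x² + y²`.
For a positive definite integral ternary form of determinant `1`, let `m` be its least value
at the first column of a unimodular matrix, and change variables by that matrix. Completing
the square in the first variable leaves a binary form of determinant `m` whose values at
primitive vectors are at least `3 m² / 4`; with the binary bound this gives `27 m³ ≤ 64`, so
`m = 1`, the leftover binary form has determinant `1`, and the ternary form is `x² + y² + z²`.

For `n ≡ 1, 2 (mod 4)`, Dirichlet's theorem on primes in progressions gives a prime `q` with
`n D = q + 1` and `J(-D | q) = 1`, so `β² + D = c q` for some `β, c`. The matrix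
`[[q, β, 0], [β, c, 1], [0, 1, n]]` is then positive definite of determinant `n D - q = 1`
and represents `n`. One of `l`, `l - 2` is `≡ 1, 2 (mod 4)`.
-/

open Matrix

theorem Int.exists_four_mul_sq_add_mul_le (r : ℤ) {m : ℤ} (hm : 0 < m) :
    ∃ k : ℤ, 4 * (r + k * m) ^ 2 ≤ m ^ 2 := by
  have h0 := Int.emod_nonneg r hm.ne'
  have h1 := Int.emod_lt_of_pos r hm
  have hr : r + -(r / m) * m = r % m := by rw [Int.emod_def]; ring
  rcases le_or_gt (2 * (r % m)) m with h | h
  · exact ⟨-(r / m), by rw [hr]; nlinarith⟩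
  · exact ⟨-(r / m) - 1, by rw [sub_mul, one_mul, ← add_sub_assoc, hr]; nlinarith⟩

namespace Matrix

section Congruence

variable {n : Type*} [Fintype n]

theorem transpose_mul_mul_apply_self (M A : Matrix n n ℤ) (i : n) :
    (Mᵀ * A * M) i i = Mᵀ i ⬝ᵥ A *ᵥ Mᵀ i := by
  simp only [mul_apply, dotProduct, mulVec, transpose_apply, Finset.sum_mul, Finset.mul_sum]
  rw [Finset.sum_comm]
  exact Finset.sum_congr rfl fun _ _ => Finset.sum_congr rfl fun _ _ => by ring

theorem dotProduct_transpose_mul_mul_mulVec (P A : Matrix n n ℤ) (u : n → ℤ) :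
    u ⬝ᵥ (Pᵀ * A * P) *ᵥ u = (P *ᵥ u) ⬝ᵥ A *ᵥ (P *ᵥ u) := by
  rw [← mulVec_mulVec, ← mulVec_mulVec, dotProduct_mulVec, vecMul_transpose]

theorem transpose_mul_mul_mul (U P A : Matrix n n ℤ) :
    (U * P)ᵀ * A * (U * P) = Pᵀ * (Uᵀ * A * U) * P := by
  simp only [transpose_mul, Matrix.mul_assoc]

theorem posDef_int_iff {A : Matrix n n ℤ} :
    A.PosDef ↔ A.IsSymm ∧ ∀ x ≠ 0, 0 < x ⬝ᵥ A *ᵥ x := by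
  simp [posDef_iff_dotProduct_mulVec]

omit [Fintype n] in
theorem PosDef.isSymm {A : Matrix n n ℤ} (hA : A.PosDef) : A.IsSymm :=
  isHermitian_iff_isSymm.1 hA.isHermitian

variable [DecidableEq n]

theorem det_transpose_mul_mul {P : Matrix n n ℤ} (hP : P.det = 1) (A : Matrix n n ℤ) :
    (Pᵀ * A * P).det = A.det := by
  rw [det_mul, det_mul, det_transpose, hP, one_mul, mul_one]

theorem PosDef.transpose_mul_mul {A P : Matrix n n ℤ} (hA : A.PosDef) (hP : P.det ≠ 0) :
    (Pᵀ * A * P).PosDef := by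
  simpa [conjTranspose_eq_transpose_of_trivial] using
    hA.conjTranspose_mul_mul_same (mulVec_injective_of_det_ne_zero hP)

theorem exists_dotProduct_mulVec_eq_transpose_mul_mul {P : Matrix n n ℤ} (hP : P.det = 1)
    (A : Matrix n n ℤ) (w : n → ℤ) :
    ∃ u, w ⬝ᵥ A *ᵥ w = u ⬝ᵥ (Pᵀ * A * P) *ᵥ u := by
  obtain ⟨u, rfl⟩ :=
    mulVec_surjective_iff_isUnit.2 ((isUnit_iff_isUnit_det P).2 (by simp [hP])) w
  exact ⟨u, (dotProduct_transpose_mul_mul_mulVec P A u).symm⟩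

theorem PosDef.exists_det_eq_one_le_diag {A : Matrix n n ℤ} (hA : A.PosDef) (i : n) :
    ∃ P : Matrix n n ℤ, P.det = 1 ∧ ∀ M : Matrix n n ℤ, M.det = 1 →
      (Pᵀ * A * P) i i ≤ (Mᵀ * (Pᵀ * A * P) * M) i i := by
  obtain ⟨-, ⟨P, hP, rfl⟩, hmin⟩ := Int.exists_least_of_bdd
    (P := fun z => ∃ P : Matrix n n ℤ, P.det = 1 ∧ (Pᵀ * A * P) i i = z)
    ⟨0, by rintro _ ⟨P, hP, rfl⟩; exact (hA.transpose_mul_mul (by simp [hP])).diag_pos.le⟩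
    ⟨_, 1, det_one, rfl⟩
  refine ⟨P, hP, fun M hM => ?_⟩
  rw [← transpose_mul_mul_mul]
  exact hmin _ ⟨P * M, by rw [det_mul, hP, hM, one_mul], rfl⟩

end Congruence

section Binary

variable {A : Matrix (Fin 2) (Fin 2) ℤ}

theorem mul_dotProduct_mulVec_fin_two (hA : A.IsSymm) (u : Fin 2 → ℤ) :
    A 0 0 * (u ⬝ᵥ A *ᵥ u) = (A 0 0 * u 0 + A 0 1 * u 1) ^ 2 + A.det * u 1 ^ 2 := by
  simp only [dotProduct, mulVec, Fin.sum_univ_two, det_fin_two, hA.apply 0 1]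
  ring

theorem posDef_fin_two_of (hA : A.IsSymm) (h0 : 0 < A 0 0) (hdet : 0 < A.det) : A.PosDef := by
  refine posDef_int_iff.2 ⟨hA, fun u hu => pos_of_mul_pos_right ?_ h0.le⟩
  rw [mul_dotProduct_mulVec_fin_two hA]
  by_cases hu1 : u 1 = 0
  · have hu0 : u 0 ≠ 0 := fun hu0 => hu (funext fun i => by fin_cases i <;> assumption)
    rw [hu1, mul_zero, add_zero, zero_pow two_ne_zero, mul_zero, add_zero]
    positivity
  · positivity

theorem PosDef.exists_det_eq_one_three_mul_sq_le (hA : A.PosDef) :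
    ∃ P : Matrix (Fin 2) (Fin 2) ℤ, P.det = 1 ∧ 3 * (Pᵀ * A * P) 0 0 ^ 2 ≤ 4 * A.det := by
  induction h : (A 0 0).toNat using Nat.strong_induction_on generalizing A with
  | _ N ih =>
  have ha := hA.diag_pos (i := 0)
  obtain ⟨k, hk⟩ := Int.exists_four_mul_sq_add_mul_le (A 0 1) ha
  -- `U` shifts the first variable by `k` times the second, then swaps the two variables.
  set U : Matrix (Fin 2) (Fin 2) ℤ := !![k, -1; 1, 0]
  have hU : U.det = 1 := by simp [U, det_fin_two_of]
  have hUA : (Uᵀ * A * U) 0 0 = ![k, 1] ⬝ᵥ A *ᵥ ![k, 1] := by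
    rw [transpose_mul_mul_apply_self]
    congr 2 <;> exact funext fun i => by fin_cases i <;> rfl
  have hdet := mul_dotProduct_mulVec_fin_two hA.isSymm ![k, 1]
  rw [← hUA] at hdet
  simp only [cons_val_zero, cons_val_one, mul_one, one_pow] at hdet
  by_cases hle : A 0 0 ≤ (Uᵀ * A * U) 0 0
  · refine ⟨1, det_one, ?_⟩
    rw [transpose_one, Matrix.one_mul, Matrix.mul_one]
    nlinarith
  · obtain ⟨P, hP, hPle⟩ := ih _ (by omega) (hA.transpose_mul_mul (P := U) (by simp [hU])) rfl
    refine ⟨U * P, by rw [det_mul, hU, hP, one_mul], ?_⟩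
    rwa [transpose_mul_mul_mul, ← det_transpose_mul_mul hU]

theorem PosDef.exists_sq_add_sq_of_det_eq_one (hA : A.PosDef) (hdet : A.det = 1)
    (w : Fin 2 → ℤ) : ∃ r s : ℤ, w ⬝ᵥ A *ᵥ w = r ^ 2 + s ^ 2 := by
  obtain ⟨P, hP, hle⟩ := hA.exists_det_eq_one_three_mul_sq_le
  have hB := hA.transpose_mul_mul (P := P) (by simp [hP])
  have hB00 : (Pᵀ * A * P) 0 0 = 1 := by
    have := hB.diag_pos (i := 0)
    nlinarith
  obtain ⟨u, hu⟩ := exists_dotProduct_mulVec_eq_transpose_mul_mul hP A w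
  have key := mul_dotProduct_mulVec_fin_two hB.isSymm u
  rw [hB00, det_transpose_mul_mul hP, hdet, one_mul, one_mul, one_mul] at key
  exact ⟨u 0 + (Pᵀ * A * P) 0 1 * u 1, u 1, by rw [hu, key]⟩

end Binary

section Ternary

/-- `B 0 0` times the Schur complement of the entry `B 0 0`: the binary form left over after
completing the square in the first variable. -/
def scaledSchur (B : Matrix (Fin 3) (Fin 3) ℤ) : Matrix (Fin 2) (Fin 2) ℤ :=
  !![B 0 0 * B 1 1 - B 0 1 ^ 2, B 0 0 * B 1 2 - B 0 1 * B 0 2;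
     B 0 0 * B 1 2 - B 0 1 * B 0 2, B 0 0 * B 2 2 - B 0 2 ^ 2]

variable {B : Matrix (Fin 3) (Fin 3) ℤ}

theorem isSymm_scaledSchur : B.scaledSchur.IsSymm :=
  IsSymm.ext fun i j => by fin_cases i <;> fin_cases j <;> rfl

theorem mul_dotProduct_mulVec_fin_three (hB : B.IsSymm) (u : Fin 3 → ℤ) :
    B 0 0 * (u ⬝ᵥ B *ᵥ u) = (B 0 0 * u 0 + B 0 1 * u 1 + B 0 2 * u 2) ^ 2 +
      ![u 1, u 2] ⬝ᵥ B.scaledSchur *ᵥ ![u 1, u 2] := by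
  simp only [dotProduct, mulVec, Fin.sum_univ_two, Fin.sum_univ_three, scaledSchur,
    hB.apply 0 1, hB.apply 0 2, hB.apply 1 2, of_apply, cons_val', cons_val_zero, cons_val_one,
    empty_val', cons_val_fin_one]
  ring

theorem det_scaledSchur (hB : B.IsSymm) : B.scaledSchur.det = B 0 0 * B.det := by
  simp only [scaledSchur, det_fin_two_of, det_fin_three, hB.apply 0 1, hB.apply 0 2,
    hB.apply 1 2]
  ring

theorem PosDef.scaledSchur (hB : B.PosDef) : B.scaledSchur.PosDef := by
  refine posDef_int_iff.2 ⟨isSymm_scaledSchur, fun y hy => ?_⟩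
  have hm := hB.diag_pos (i := 0)
  set v : Fin 3 → ℤ := ![-(B 0 1 * y 0 + B 0 2 * y 1), B 0 0 * y 0, B 0 0 * y 1]
  have hv : v ≠ 0 := fun h => hy (funext fun i => by
    fin_cases i
    · simpa [v, hm.ne'] using congrFun h 1
    · simpa [v, hm.ne'] using congrFun h 2)
  have key := mul_dotProduct_mulVec_fin_three hB.isSymm v
  have hvy : ![v 1, v 2] = B 0 0 • y := funext fun i => by fin_cases i <;> rfl
  have hv0 : B 0 0 * v 0 + B 0 1 * v 1 + B 0 2 * v 2 = 0 := by
    change B 0 0 * -(B 0 1 * y 0 + B 0 2 * y 1) + B 0 1 * (B 0 0 * y 0) +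
      B 0 2 * (B 0 0 * y 1) = 0
    ring
  rw [hvy, hv0, mulVec_smul, dotProduct_smul, smul_dotProduct, smul_eq_mul, smul_eq_mul] at key
  have hpos : 0 < B 0 0 * (B 0 0 * (y ⬝ᵥ B.scaledSchur *ᵥ y)) := by
    rw [← zero_add (_ * _), ← zero_pow two_ne_zero, ← key]
    exact mul_pos hm ((posDef_int_iff.1 hB).2 v hv)
  exact pos_of_mul_pos_right (pos_of_mul_pos_right hpos hm.le) hm.le

theorem posDef_of_scaledSchur (hB : B.IsSymm) (h0 : 0 < B 0 0) (hS : B.scaledSchur.PosDef) :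
    B.PosDef := by
  refine posDef_int_iff.2 ⟨hB, fun u hu => pos_of_mul_pos_right ?_ h0.le⟩
  rw [mul_dotProduct_mulVec_fin_three hB]
  by_cases hu12 : ![u 1, u 2] = 0
  · have h1 : u 1 = 0 := congrFun hu12 0
    have h2 : u 2 = 0 := congrFun hu12 1
    have hu0 : u 0 ≠ 0 := fun hu0 => hu (funext fun i => by fin_cases i <;> assumption)
    rw [hu12, mulVec_zero, dotProduct_zero, h1, h2]
    simp only [mul_zero, add_zero]
    positivity
  · have := (posDef_int_iff.1 hS).2 _ hu12
    positivity

theorem posDef_fin_three_of (hB : B.IsSymm) (h0 : 0 < B 0 0)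
    (h1 : 0 < B 0 0 * B 1 1 - B 0 1 ^ 2) (hdet : 0 < B.det) : B.PosDef :=
  posDef_of_scaledSchur hB h0 <| posDef_fin_two_of isSymm_scaledSchur h1 <| by
    rw [det_scaledSchur hB]; positivity

theorem PosDef.apply_zero_zero_eq_one_of_le (hB : B.PosDef) (hdet : B.det = 1)
    (hmin : ∀ M : Matrix (Fin 3) (Fin 3) ℤ, M.det = 1 → B 0 0 ≤ (Mᵀ * B * M) 0 0) :
    B 0 0 = 1 := by
  have hm := hB.diag_pos (i := 0)
  obtain ⟨P, hP, hμ⟩ := hB.scaledSchur.exists_det_eq_one_three_mul_sq_le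
  rw [det_scaledSchur hB.isSymm, hdet, mul_one] at hμ
  obtain ⟨k, hk⟩ := Int.exists_four_mul_sq_add_mul_le (B 0 1 * P 0 0 + B 0 2 * P 1 0) hm
  set M : Matrix (Fin 3) (Fin 3) ℤ := !![k, -1, 0; P 0 0, 0, P 0 1; P 1 0, 0, P 1 1]
  have hM : M.det = 1 := by
    rw [← hP, det_fin_two, det_fin_three]
    simp only [M, of_apply, cons_val', cons_val_zero, cons_val_fin_one, cons_val_one, cons_val]
    ring
  have hcol : Mᵀ 0 = ![k, P 0 0, P 1 0] := funext fun i => by fin_cases i <;> rfl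
  have hPcol : Pᵀ 0 = ![P 0 0, P 1 0] := funext fun i => by fin_cases i <;> rfl
  have key := mul_dotProduct_mulVec_fin_three hB.isSymm (Mᵀ 0)
  rw [← transpose_mul_mul_apply_self, hcol] at key
  simp only [cons_val_zero, cons_val_one, cons_val_two, Nat.succ_eq_add_one, Nat.reduceAdd,
    tail_cons, head_cons] at key
  rw [← hPcol, ← transpose_mul_mul_apply_self] at key
  have h1 := mul_le_mul_of_nonneg_left (hmin M hM) hm.le
  have hμpos := (hB.scaledSchur.transpose_mul_mul (P := P) (by simp [hP])).diag_pos (i := 0)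
  -- For `m = B 0 0` and `μ = (Pᵀ * B.scaledSchur * P) 0 0`, minimality of `m` and the choice
  -- of `k` give `3 m² ≤ 4 μ`, while `hμ` says `3 μ² ≤ 4 m`.
  nlinarith

theorem PosDef.exists_sum_three_sq_of_det_eq_one {A : Matrix (Fin 3) (Fin 3) ℤ} (hA : A.PosDef)
    (hdet : A.det = 1) (w : Fin 3 → ℤ) :
    ∃ r s t : ℤ, w ⬝ᵥ A *ᵥ w = r ^ 2 + s ^ 2 + t ^ 2 := by
  obtain ⟨P, hP, hmin⟩ := hA.exists_det_eq_one_le_diag 0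
  set B := Pᵀ * A * P
  have hB : B.PosDef := hA.transpose_mul_mul (by simp [hP])
  have hBdet : B.det = 1 := by rw [det_transpose_mul_mul hP, hdet]
  have hB00 : B 0 0 = 1 := hB.apply_zero_zero_eq_one_of_le hBdet hmin
  obtain ⟨u, hu⟩ := exists_dotProduct_mulVec_eq_transpose_mul_mul hP A w
  have hG : B.scaledSchur.det = 1 := by rw [det_scaledSchur hB.isSymm, hB00, hBdet, one_mul]
  obtain ⟨r, s, hrs⟩ := hB.scaledSchur.exists_sq_add_sq_of_det_eq_one hG ![u 1, u 2]
  have key := mul_dotProduct_mulVec_fin_three hB.isSymm u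
  rw [hB00, one_mul, one_mul, hrs] at key
  exact ⟨u 0 + B 0 1 * u 1 + B 0 2 * u 2, r, s, by rw [hu, key]; ring⟩

end Ternary

end Matrix

theorem Nat.exists_prime_add_one_eq_mul {m : ℕ} (hm : m % 4 = 2) :
    ∃ q k : ℕ, q.Prime ∧ q + 1 = m * (4 * k + 1) := by
  have hcop : (m - 1).Coprime (4 * m) := by
    have h2 : (m - 1).Coprime (2 ^ 2) :=
      (Nat.coprime_two_right.2 (Nat.odd_iff.2 (by omega))).pow_right 2
    exact h2.mul_right ((Nat.coprime_self_sub_left (by omega)).2 (Nat.coprime_one_left m))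
  obtain ⟨q, -, hq, hqm⟩ := Nat.forall_exists_prime_gt_and_modEq 0 (by omega) hcop
  have hmod : q % (4 * m) = m - 1 := by rw [hqm]; exact Nat.mod_eq_of_lt (by omega)
  refine ⟨q, q / (4 * m), hq, ?_⟩
  have := Nat.div_add_mod q (4 * m)
  have : m * (4 * (q / (4 * m)) + 1) = 4 * m * (q / (4 * m)) + m := by ring
  omega

theorem jacobiSym_neg_eq_one_of_dvd_add_one {q d : ℕ} (hq : q % 4 = 1) (hd : d % 4 = 1)
    (hdq : d ∣ q + 1) : jacobiSym (-d) q = 1 := by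
  have hqodd : Odd q := Nat.odd_iff.2 (by omega)
  have hmod : (q : ℤ) ≡ -1 [ZMOD d] := by
    rw [Int.modEq_iff_dvd, show (-1 : ℤ) - q = -((q + 1 : ℕ) : ℤ) by push_cast; ring]
    exact (Int.natCast_dvd_natCast.2 hdq).neg_right
  rw [neg_eq_neg_one_mul, jacobiSym.mul_left, jacobiSym.at_neg_one hqodd,
    ZMod.χ₄_nat_one_mod_four hq, jacobiSym.quadratic_reciprocity_one_mod_four hd hqodd,
    jacobiSym.mod_left' hmod, jacobiSym.at_neg_one (Nat.odd_iff.2 (by omega)),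
    ZMod.χ₄_nat_one_mod_four hd, one_mul]

theorem Nat.exists_prime_mul_eq_add_one_and_jacobiSym_eq_one {n : ℕ}
    (hn : n % 4 = 1 ∨ n % 4 = 2) :
    ∃ q D : ℕ, q.Prime ∧ n * D = q + 1 ∧ jacobiSym (-D) q = 1 := by
  rcases hn with hn | hn
  · obtain ⟨q, k, hq, hqk⟩ := Nat.exists_prime_add_one_eq_mul (m := 2 * n) (by omega)
    have : q + 1 = 8 * (n * k) + 2 * n := by rw [hqk]; ring
    refine ⟨q, 2 * (4 * k + 1), hq, by rw [hqk]; ring, ?_⟩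
    rw [Nat.cast_mul, Nat.cast_two, ← mul_neg, jacobiSym.mul_left,
      jacobiSym.at_two (Nat.odd_iff.2 (by omega)), ZMod.χ₈_nat_eq_if_mod_eight,
      if_neg (by omega), if_pos (Or.inl (by omega)),
      jacobiSym_neg_eq_one_of_dvd_add_one (by omega) (by omega) ⟨2 * n, by rw [hqk]; ring⟩,
      one_mul]
  · obtain ⟨q, k, hq, hqk⟩ := Nat.exists_prime_add_one_eq_mul hn
    have : q + 1 = 4 * (n * k) + n := by rw [hqk]; ring
    exact ⟨q, 4 * k + 1, hq, hqk.symm,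
      jacobiSym_neg_eq_one_of_dvd_add_one (by omega) (by omega) ⟨n, by rw [hqk]; ring⟩⟩

theorem exists_sq_add_eq_mul_of_jacobiSym_neg_eq_one {q : ℕ} [Fact q.Prime] {D : ℤ}
    (h : jacobiSym (-D) q = 1) : ∃ β c : ℤ, β ^ 2 + D = c * q := by
  obtain ⟨s, hs⟩ := ZMod.isSquare_of_jacobiSym_eq_one h
  obtain ⟨c, hc⟩ := (ZMod.intCast_zmod_eq_zero_iff_dvd ((s.cast : ℤ) ^ 2 + D) q).1 (by
    push_cast [ZMod.intCast_zmod_cast] at hs ⊢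
    linear_combination -hs)
  exact ⟨s.cast, c, by rw [hc, mul_comm]⟩

theorem Nat.exists_eq_sq_add_sq_add_sq_of_mod_four {n : ℕ} (hn : n % 4 = 1 ∨ n % 4 = 2) :
    ∃ x y z : ℕ, n = x ^ 2 + y ^ 2 + z ^ 2 := by
  obtain ⟨q, D, hq, hnD, hJ⟩ := Nat.exists_prime_mul_eq_add_one_and_jacobiSym_eq_one hn
  have := Fact.mk hq
  obtain ⟨β, c, hβ⟩ := exists_sq_add_eq_mul_of_jacobiSym_neg_eq_one hJ
  have hD : (0 : ℤ) < D := by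
    have : D ≠ 0 := by rintro rfl; simp at hnD
    positivity
  have hnDz : (n : ℤ) * D = q + 1 := by exact_mod_cast hnD
  set A : Matrix (Fin 3) (Fin 3) ℤ := !![(q : ℤ), β, 0; β, c, 1; 0, 1, n]
  have hdet : A.det = 1 := by
    simp only [A, det_fin_three, of_apply, cons_val', cons_val_zero, cons_val_fin_one,
      cons_val_one, cons_val, mul_one, mul_zero, add_zero, zero_mul, sub_zero]
    linear_combination (-(n : ℤ)) * hβ + hnDz
  have hA : A.PosDef :=
    posDef_fin_three_of (IsSymm.ext fun i j => by fin_cases i <;> fin_cases j <;> rfl)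
      (show (0 : ℤ) < q by exact_mod_cast hq.pos) (show (0 : ℤ) < q * c - β ^ 2 by linarith)
      (by rw [hdet]; exact one_pos)
  obtain ⟨r, s, t, h⟩ := hA.exists_sum_three_sq_of_det_eq_one hdet ![0, 0, 1]
  have hval : ![0, 0, 1] ⬝ᵥ A *ᵥ ![0, 0, 1] = n := by
    simp [A, dotProduct, mulVec, Fin.sum_univ_three]
  refine ⟨r.natAbs, s.natAbs, t.natAbs, ?_⟩
  zify
  rw [sq_abs, sq_abs, sq_abs, ← h, hval]

theorem stmt11 (l : ℕ) (hl : 2 ≤ l) :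
    (∃ x y z : ℕ, l = x ^ 2 + y ^ 2 + z ^ 2) ∨
    (∃ x y z : ℕ, l - 2 = x ^ 2 + y ^ 2 + z ^ 2) := by
  by_cases h : l % 4 = 1 ∨ l % 4 = 2
  · exact Or.inl (Nat.exists_eq_sq_add_sq_add_sq_of_mod_four h)
  · exact Or.inr (Nat.exists_eq_sq_add_sq_add_sq_of_mod_four (by omega))
end
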